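/- Under the NIW posterior update (μ_{t+1}, κ_{t+1}, v_{t+1}, ψ_{t+1}) = ((κ_t μ_t + n μ̄_t)/(κ_t+n), κ_t+n, v_t+n, ψ_t + Σ̄_t + (κ_t n/(κ_t+n))(μ̄_t−μ_t)(μ̄_t−μ_t)ᵀ), and with E_t[Σ] = ψ_t/(v_t − n − 1), the updated expected covariance satisfies E_{t+1}[Σ] = ψ_{t+1}/(v_{t+1} − n − 1) = w₁ E_t[Σ] + w₂ (μ̄_t − μ_t)(μ̄_t − μ_t)ᵀ + w₃ Σ̄_t, where w₁ = (v_t − n − 1)/(v_t − 1), w₂ = κ_t n/((κ_t + n)(v_t − 1)), and w₃ = 1/(v_t − 1). -/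

import Mathlib

open Matrix

theorem one_div_smul_add_add_smul_eq {K E : Type*} [Field K] [AddCommGroup E] [Module K E]
    {a : K} (ha : a ≠ 0) (d c : K) (ψ S R : E) :
    (1 / d) • (ψ + S + c • R) = (a / d) • ((1 / a) • ψ) + (c / d) • R + (1 / d) • S := by
  have hweight : a / d * (1 / a) = 1 / d := by field_simp
  rw [smul_smul, hweight]
  module

theorem stmt_16_general (n : ℕ) (κt vt : ℝ)
    (hv : vt > (n : ℝ) + 1)
    (μt μbar : Fin n → ℝ) (ψt Sbar : Matrix (Fin n) (Fin n) ℝ)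
    (ψnext : Matrix (Fin n) (Fin n) ℝ) (vnext : ℝ)
    (hψ : ψnext = ψt + Sbar + (κt * n / (κt + n)) • vecMulVec (μbar - μt) (μbar - μt))
    (hvnext : vnext = vt + n)
    (w₁ w₂ w₃ : ℝ)
    (hw₁ : w₁ = (vt - n - 1) / (vt - 1))
    (hw₂ : w₂ = κt * n / ((κt + n) * (vt - 1)))
    (hw₃ : w₃ = 1 / (vt - 1)) :
    (1 / (vnext - n - 1)) • ψnext
      = w₁ • ((1 / (vt - n - 1)) • ψt)
        + w₂ • vecMulVec (μbar - μt) (μbar - μt)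
        + w₃ • Sbar := by
  have hdof : vt - n - 1 ≠ 0 := by linarith
  have hvnext' : vnext - n - 1 = vt - 1 := by rw [hvnext]; ring
  rw [hψ, hvnext', hw₁, hw₂, hw₃, ← div_div]
  exact one_div_smul_add_add_smul_eq hdof _ _ _ _ _

/-- BCMA-ES covariance update: the updated expected covariance is a weighted
combination of the prior expected covariance, a rank-one matrix and the
empirical covariance. -/
theorem stmt_16 (n : ℕ) (hn : 0 < n) (κt vt : ℝ) (hκ : 0 < κt)
    (hv : vt > (n : ℝ) + 1)
    (μt μbar : Fin n → ℝ) (ψt Sbar : Matrix (Fin n) (Fin n) ℝ)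
    (ψnext : Matrix (Fin n) (Fin n) ℝ) (vnext : ℝ)
    (hψ : ψnext = ψt + Sbar + (κt * n / (κt + n)) • vecMulVec (μbar - μt) (μbar - μt))
    (hvnext : vnext = vt + n)
    (w₁ w₂ w₃ : ℝ)
    (hw₁ : w₁ = (vt - n - 1) / (vt - 1))
    (hw₂ : w₂ = κt * n / ((κt + n) * (vt - 1)))
    (hw₃ : w₃ = 1 / (vt - 1)) :
    (1 / (vnext - n - 1)) • ψnext
      = w₁ • ((1 / (vt - n - 1)) • ψt)
        + w₂ • vecMulVec (μbar - μt) (μbar - μt)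
        + w₃ • Sbar :=
  stmt_16_general n κt vt hv μt μbar ψt Sbar ψnext vnext hψ hvnext w₁ w₂ w₃ hw₁ hw₂ hw₃
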